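/- arXiv:math/0210325 — 2 statements merged into one kernel-verified Lean document; each statement's English description precedes it below -/
import Mathlib

section
/- Given an exact sequence of finitely generated abelian groups A → B ⊕ D → E → F, where rank(A) ≤ C, rank(F) ≤ C, the map A → D is surjective with kernel of rank ≤ C, and rank(B) = V k^n + O(k^{n-1}), then rank(E) = V k^n + O(k^{n-1}). -/
/-!
Exactness at `B × D` and at `E` gives
`rank E = rank B + rank D - rank (im f) + rank (im h)`.
Since `im f` is a quotient of `A` that still surjects onto `D`,
`rank D ≤ rank (im f) ≤ rank D + rank ker (A → D)`, and `rank (im h) ≤ rank F`;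
so `rank E` differs from `rank B` by at most `C`, which the `O(k^(n-1))` error absorbs.
-/

open Module LinearMap

universe u

section RankNullity

variable {R : Type*} [Ring R] [HasRankNullity.{u} R] [StrongRankCondition R]
  {M N P : Type u} [AddCommGroup M] [AddCommGroup N] [AddCommGroup P]
  [Module R M] [Module R N] [Module R P]

theorem LinearMap.finrank_range_add_finrank_ker_of_hasRankNullity [Module.Finite R M]
    (φ : M →ₗ[R] N) : finrank R (range φ) + finrank R (ker φ) = finrank R M := by
  rw [← φ.quotKerEquivRange.finrank_eq]
  exact Submodule.finrank_quotient_add_finrank _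

theorem LinearMap.finrank_add_finrank_ker_of_surjective [Module.Finite R M] {φ : M →ₗ[R] N}
    (hφ : Function.Surjective φ) : finrank R N + finrank R (ker φ) = finrank R M := by
  rw [← φ.finrank_range_add_finrank_ker_of_hasRankNullity, range_eq_top.2 hφ, finrank_top]

theorem Module.finrank_prod_of_hasRankNullity [Module.Finite R M] [Module.Finite R N] :
    finrank R (M × N) = finrank R M + finrank R N := by
  rw [← finrank_add_finrank_ker_of_surjective (snd_surjective (R := R) (M := M) (M₂ := N)),
    ker_snd, finrank_range_of_inj inl_injective, add_comm]

theorem Function.Exact.finrank_eq_finrank_range_add_finrank_range [Module.Finite R N]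
    {φ : M →ₗ[R] N} {ψ : N →ₗ[R] P} (hφψ : Function.Exact φ ψ) :
    finrank R N = finrank R (range φ) + finrank R (range ψ) := by
  rw [← ψ.finrank_range_add_finrank_ker_of_hasRankNullity, exact_iff.1 hφψ, add_comm]

end RankNullity

section MayerVietoris

variable {R : Type*} [Ring R] [HasRankNullity.{u} R] [StrongRankCondition R]
  {A B D E F : Type u} [AddCommGroup A] [AddCommGroup B] [AddCommGroup D] [AddCommGroup E]
  [AddCommGroup F] [Module R A] [Module R B] [Module R D] [Module R E] [Module R F]
  [Module.Finite R A] [Module.Finite R B] [Module.Finite R D] [Module.Finite R E]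
  {f : A →ₗ[R] B × D} {g : B × D →ₗ[R] E} {h : E →ₗ[R] F}

theorem finrank_le_finrank_add_finrank_of_exact [Module.Finite R F]
    (hfg : Function.Exact f g) (hgh : Function.Exact g h)
    (hf : Function.Surjective (snd R B D ∘ₗ f)) :
    finrank R E ≤ finrank R B + finrank R F := by
  have hD : finrank R D ≤ finrank R (range f) := by
    rw [← finrank_top R D, ← range_eq_top.2 hf, range_comp]
    exact Submodule.finrank_map_le _ _
  have hF : finrank R (range h) ≤ finrank R F := Submodule.finrank_le _
  have hBD := hfg.finrank_eq_finrank_range_add_finrank_range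
  have hE := hgh.finrank_eq_finrank_range_add_finrank_range
  rw [finrank_prod_of_hasRankNullity] at hBD
  omega

theorem finrank_le_finrank_add_finrank_ker_of_exact
    (hfg : Function.Exact f g) (hgh : Function.Exact g h)
    (hf : Function.Surjective (snd R B D ∘ₗ f)) :
    finrank R B ≤ finrank R E + finrank R (ker (snd R B D ∘ₗ f)) := by
  have hA : finrank R (range f) ≤ finrank R A := f.finrank_range_le
  have hDA := finrank_add_finrank_ker_of_surjective hf
  have hBD := hfg.finrank_eq_finrank_range_add_finrank_range
  have hE := hgh.finrank_eq_finrank_range_add_finrank_range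
  rw [finrank_prod_of_hasRankNullity] at hBD
  omega

end MayerVietoris

theorem stmt1_general (n : ℕ) (V C : ℝ)
    (A B D E F : ℕ → Type) [∀ k, AddCommGroup (A k)] [∀ k, AddCommGroup (B k)]
    [∀ k, AddCommGroup (D k)] [∀ k, AddCommGroup (E k)] [∀ k, AddCommGroup (F k)]
    [∀ k, Module.Finite ℤ (A k)] [∀ k, Module.Finite ℤ (B k)]
    [∀ k, Module.Finite ℤ (D k)] [∀ k, Module.Finite ℤ (E k)]
    [∀ k, Module.Finite ℤ (F k)]
    (f : ∀ k, A k →+ B k × D k) (g : ∀ k, B k × D k →+ E k) (h : ∀ k, E k →+ F k)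
    (hexact₁ : ∀ k, (f k).range = (g k).ker)
    (hexact₂ : ∀ k, (g k).range = (h k).ker)
    (hF : ∀ k, (Module.finrank ℤ (F k) : ℝ) ≤ C)
    (hAD : ∀ k, Function.Surjective ((AddMonoidHom.snd (B k) (D k)).comp (f k)))
    (hADker : ∀ k,
      (Module.finrank ℤ ↥((AddMonoidHom.snd (B k) (D k)).comp (f k)).ker : ℝ) ≤ C)
    (hB : ∀ k : ℕ, 1 ≤ k →
      |(Module.finrank ℤ (B k) : ℝ) - V * (k : ℝ) ^ n| ≤ C * (k : ℝ) ^ (n - 1)) :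
    ∃ C' : ℝ, ∀ k : ℕ, 1 ≤ k →
      |(Module.finrank ℤ (E k) : ℝ) - V * (k : ℝ) ^ n| ≤ C' * (k : ℝ) ^ (n - 1) := by
  refine ⟨2 * C, fun k hk => ?_⟩
  have hfg : Function.Exact (f k).toIntLinearMap (g k).toIntLinearMap :=
    AddMonoidHom.exact_iff.2 (hexact₁ k).symm
  have hgh : Function.Exact (g k).toIntLinearMap (h k).toIntLinearMap :=
    AddMonoidHom.exact_iff.2 (hexact₂ k).symm
  have hE_le : (finrank ℤ (E k) : ℝ) ≤ finrank ℤ (B k) + finrank ℤ (F k) := by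
    exact_mod_cast finrank_le_finrank_add_finrank_of_exact hfg hgh (hAD k)
  have hB_le : (finrank ℤ (B k) : ℝ) ≤
      finrank ℤ (E k) + finrank ℤ ((AddMonoidHom.snd (B k) (D k)).comp (f k)).ker := by
    exact_mod_cast finrank_le_finrank_add_finrank_ker_of_exact hfg hgh (hAD k)
  have hC : 0 ≤ C := (Nat.cast_nonneg _).trans (hF 0)
  have hpow : 1 ≤ (k : ℝ) ^ (n - 1) := one_le_pow₀ (by exact_mod_cast hk)
  calc |(finrank ℤ (E k) : ℝ) - V * k ^ n|
      ≤ |(finrank ℤ (E k) : ℝ) - finrank ℤ (B k)| + |(finrank ℤ (B k) : ℝ) - V * k ^ n| :=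
        abs_sub_le _ _ _
    _ ≤ C * k ^ (n - 1) + C * k ^ (n - 1) :=
        add_le_add ((abs_sub_le_iff.2 ⟨by linarith [hF k], by linarith [hADker k]⟩).trans
          (le_mul_of_one_le_right hC hpow)) (hB k hk)
    _ = 2 * C * k ^ (n - 1) := by ring

/-- Given, for each `k`, an exact sequence of finitely generated
abelian groups `A_k → B_k ⊕ D_k → E_k → F_k`, where `rank A_k ≤ C`,
`rank F_k ≤ C`, the induced map `A_k → D_k` is surjective with kernel of rank
`≤ C`, and `rank B_k = V k^n + O(k^(n-1))`, then
`rank E_k = V k^n + O(k^(n-1))`.  Here rank is torsion-free rank, i.e.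
`Module.finrank` over `ℤ`. -/
theorem stmt1 (n : ℕ) (hn : 1 ≤ n) (V C : ℝ) (hV : 0 < V)
    (A B D E F : ℕ → Type) [∀ k, AddCommGroup (A k)] [∀ k, AddCommGroup (B k)]
    [∀ k, AddCommGroup (D k)] [∀ k, AddCommGroup (E k)] [∀ k, AddCommGroup (F k)]
    [∀ k, Module.Finite ℤ (A k)] [∀ k, Module.Finite ℤ (B k)]
    [∀ k, Module.Finite ℤ (D k)] [∀ k, Module.Finite ℤ (E k)]
    [∀ k, Module.Finite ℤ (F k)]
    (f : ∀ k, A k →+ B k × D k) (g : ∀ k, B k × D k →+ E k) (h : ∀ k, E k →+ F k)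
    (hexact₁ : ∀ k, (f k).range = (g k).ker)
    (hexact₂ : ∀ k, (g k).range = (h k).ker)
    (hA : ∀ k, (Module.finrank ℤ (A k) : ℝ) ≤ C)
    (hF : ∀ k, (Module.finrank ℤ (F k) : ℝ) ≤ C)
    (hAD : ∀ k, Function.Surjective ((AddMonoidHom.snd (B k) (D k)).comp (f k)))
    (hADker : ∀ k,
      (Module.finrank ℤ ↥((AddMonoidHom.snd (B k) (D k)).comp (f k)).ker : ℝ) ≤ C)
    (hB : ∀ k : ℕ, 1 ≤ k →
      |(Module.finrank ℤ (B k) : ℝ) - V * (k : ℝ) ^ n| ≤ C * (k : ℝ) ^ (n - 1)) :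
    ∃ C' : ℝ, ∀ k : ℕ, 1 ≤ k →
      |(Module.finrank ℤ (E k) : ℝ) - V * (k : ℝ) ^ n| ≤ C' * (k : ℝ) ^ (n - 1) :=
  stmt1_general n V C A B D E F f g h hexact₁ hexact₂ hF hAD hADker hB
end

section
/- The space of nondegenerate complex quadratic forms on ℂ^n is path-connected; moreover, any two nondegenerate quadratic forms h_0, h_1 can be joined by a path h_t of nondegenerate quadratic forms whose operator norms and smallest singular values are bounded in terms of those of h_0 and h_1. -/
/-!
Write a nondegenerate symmetric `h` as `h = U Σ Ω Uᵀ`, where `U` diagonalises `h hᴴ` unitarily,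
`Σ` is the positive diagonal matrix of singular values, and `Ω` is a symmetric unitary commuting
with `Σ`; symmetry of `h` is what makes `hᴴ h` the transpose of `h hᴴ`, hence `Uᴴ h Ū` normal.
Moving `Σ` linearly to `b • 1` keeps the matrix symmetric with singular values between those of
`h` and `b`, and ends at `b • Θ` with `Θ = U Ω Uᵀ` a symmetric unitary. A symmetric unitary is
joined to `1` inside the symmetric unitaries: rotate it by a unit scalar `ζ` so that `1 + ζ Θ` is
invertible, then follow the Cayley-type path `((1 - t) + (1 + t) Z) ((1 + t) + (1 - t) Z)⁻¹`.
Hence every such `h` is joined to `b • 1` with uniform control of the singular values; the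
constants in the theorem only come from comparing the sup norm with the Euclidean norm.
-/

open Matrix WithLp Set
open scoped ComplexOrder

section NormComparison

variable {ι β γ : Type*} [Fintype ι] [SeminormedAddCommGroup β]

lemma norm_le_norm_toLp (v : ι → β) : ‖v‖ ≤ ‖toLp 2 v‖ :=
  (pi_norm_le_iff_of_nonneg (norm_nonneg _)).2 fun i => PiLp.norm_apply_le (toLp 2 v) i

lemma norm_toLp_le_sqrt_card_mul_norm (v : ι → β) :
    ‖toLp 2 v‖ ≤ √(Fintype.card ι) * ‖v‖ := by
  rw [← Real.sqrt_sq (norm_nonneg (toLp 2 v)), ← Real.sqrt_sq (norm_nonneg v),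
    ← Real.sqrt_mul (Nat.cast_nonneg _)]
  gcongr
  calc ‖toLp 2 v‖ ^ 2 = ∑ i, ‖v i‖ ^ 2 := PiLp.norm_sq_eq_of_L2 _ _
    _ ≤ ∑ _i : ι, ‖v‖ ^ 2 := by gcongr with i; exact norm_le_pi_norm v i
    _ = Fintype.card ι * ‖v‖ ^ 2 := by simp

variable [SeminormedAddCommGroup γ] {f : (ι → β) → (ι → γ)}

lemma norm_toLp_le_of_norm_le {M : ℝ} (hM : 0 ≤ M) (hf : ∀ v, ‖f v‖ ≤ M * ‖v‖) (v : ι → β) :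
    ‖toLp 2 (f v)‖ ≤ √(Fintype.card ι) * M * ‖toLp 2 v‖ :=
  calc ‖toLp 2 (f v)‖ ≤ √(Fintype.card ι) * ‖f v‖ := norm_toLp_le_sqrt_card_mul_norm _
    _ ≤ √(Fintype.card ι) * (M * ‖toLp 2 v‖) := by
        gcongr; exact (hf v).trans (by gcongr; exact norm_le_norm_toLp v)
    _ = √(Fintype.card ι) * M * ‖toLp 2 v‖ := by ring

lemma norm_le_of_norm_toLp_le {M : ℝ} (hM : 0 ≤ M)
    (hf : ∀ v, ‖toLp 2 (f v)‖ ≤ M * ‖toLp 2 v‖) (v : ι → β) :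
    ‖f v‖ ≤ √(Fintype.card ι) * M * ‖v‖ :=
  calc ‖f v‖ ≤ ‖toLp 2 (f v)‖ := norm_le_norm_toLp _
    _ ≤ M * (√(Fintype.card ι) * ‖v‖) :=
        (hf v).trans (by gcongr; exact norm_toLp_le_sqrt_card_mul_norm v)
    _ = √(Fintype.card ι) * M * ‖v‖ := by ring

lemma le_norm_toLp_of_le_norm {m : ℝ} (hf : ∀ v, m * ‖v‖ ≤ ‖f v‖) (v : ι → β) :
    m / √(Fintype.card ι) * ‖toLp 2 v‖ ≤ ‖toLp 2 (f v)‖ := by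
  rcases le_or_gt m 0 with hm | hm
  · exact (mul_nonpos_of_nonpos_of_nonneg (div_nonpos_of_nonpos_of_nonneg hm (by positivity))
      (norm_nonneg _)).trans (norm_nonneg _)
  rw [div_mul_eq_mul_div]
  refine div_le_of_le_mul₀ (Real.sqrt_nonneg _) (norm_nonneg _) ?_
  calc m * ‖toLp 2 v‖ ≤ m * (√(Fintype.card ι) * ‖v‖) := by
        gcongr; exact norm_toLp_le_sqrt_card_mul_norm v
    _ = √(Fintype.card ι) * (m * ‖v‖) := by ring
    _ ≤ ‖toLp 2 (f v)‖ * √(Fintype.card ι) := by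
        rw [mul_comm]; gcongr; exact (hf v).trans (norm_le_norm_toLp _)

lemma le_norm_of_le_norm_toLp {m : ℝ} (hf : ∀ v, m * ‖toLp 2 v‖ ≤ ‖toLp 2 (f v)‖) (v : ι → β) :
    m / √(Fintype.card ι) * ‖v‖ ≤ ‖f v‖ := by
  rcases le_or_gt m 0 with hm | hm
  · exact (mul_nonpos_of_nonpos_of_nonneg (div_nonpos_of_nonpos_of_nonneg hm (by positivity))
      (norm_nonneg _)).trans (norm_nonneg _)
  rw [div_mul_eq_mul_div]
  refine div_le_of_le_mul₀ (Real.sqrt_nonneg _) (norm_nonneg _) ?_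
  calc m * ‖v‖ ≤ m * ‖toLp 2 v‖ := by gcongr; exact norm_le_norm_toLp v
    _ ≤ ‖toLp 2 (f v)‖ := hf v
    _ ≤ ‖f v‖ * √(Fintype.card ι) := by
        rw [mul_comm]; exact norm_toLp_le_sqrt_card_mul_norm _

end NormComparison

lemma nonneg_of_norm_le_mul {E F : Type*} [NormedAddCommGroup E] [Nontrivial E]
    [SeminormedAddCommGroup F] {f : E → F} {M : ℝ} (hf : ∀ v, ‖f v‖ ≤ M * ‖v‖) : 0 ≤ M := by
  obtain ⟨v, hv⟩ := exists_ne (0 : E)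
  exact nonneg_of_mul_nonneg_left ((norm_nonneg _).trans (hf v)) (norm_pos_iff.2 hv)

namespace Matrix

variable {ι : Type*} [Fintype ι]

def SingularValuesIn (A : Matrix ι ι ℂ) (a b : ℝ) : Prop :=
  ∀ v : ι → ℂ, a * ‖toLp 2 v‖ ≤ ‖toLp 2 (A *ᵥ v)‖ ∧ ‖toLp 2 (A *ᵥ v)‖ ≤ b * ‖toLp 2 v‖

theorem SingularValuesIn.mono {A : Matrix ι ι ℂ} {a b a' b' : ℝ} (hA : A.SingularValuesIn a b)
    (ha : a' ≤ a) (hb : b ≤ b') : A.SingularValuesIn a' b' := fun v =>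
  ⟨(mul_le_mul_of_nonneg_right ha (norm_nonneg _)).trans (hA v).1,
    (hA v).2.trans (mul_le_mul_of_nonneg_right hb (norm_nonneg _))⟩

theorem singularValuesIn_of_norm_mulVec_bounds {A : Matrix ι ι ℂ} {m M : ℝ} (hM : 0 ≤ M)
    (hAm : ∀ v, m * ‖v‖ ≤ ‖A *ᵥ v‖) (hAM : ∀ v, ‖A *ᵥ v‖ ≤ M * ‖v‖) :
    A.SingularValuesIn (m / √(Fintype.card ι)) (√(Fintype.card ι) * M) := fun v =>
  ⟨le_norm_toLp_of_le_norm (f := (A *ᵥ ·)) hAm v, norm_toLp_le_of_norm_le (f := (A *ᵥ ·)) hM hAM v⟩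

theorem SingularValuesIn.norm_mulVec_bounds {A : Matrix ι ι ℂ} {a b : ℝ}
    (hA : A.SingularValuesIn a b) (hb : 0 ≤ b) (v : ι → ℂ) :
    a / √(Fintype.card ι) * ‖v‖ ≤ ‖A *ᵥ v‖ ∧ ‖A *ᵥ v‖ ≤ √(Fintype.card ι) * b * ‖v‖ :=
  ⟨le_norm_of_le_norm_toLp (f := (A *ᵥ ·)) (fun v => (hA v).1) v,
    norm_le_of_norm_toLp_le (f := (A *ᵥ ·)) hb (fun v => (hA v).2) v⟩

variable [DecidableEq ι]

lemma norm_toLp_mulVec_of_mem_unitaryGroup {U : Matrix ι ι ℂ} (hU : U ∈ unitaryGroup ι ℂ)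
    (v : ι → ℂ) : ‖toLp 2 (U *ᵥ v)‖ = ‖toLp 2 v‖ := by
  simpa using ContinuousLinearMap.norm_map_of_mem_unitary
    (Unitary.map_mem (toEuclideanCLM (𝕜 := ℂ)) hU) (toLp 2 v)

lemma norm_toLp_diagonal_mulVec_le {d : ι → ℂ} {b : ℝ} (hd : ∀ i, ‖d i‖ ≤ b)
    (v : ι → ℂ) : ‖toLp 2 (diagonal d *ᵥ v)‖ ≤ b * ‖toLp 2 v‖ := by
  rcases isEmpty_or_nonempty ι with _ | ⟨⟨i⟩⟩
  · simp [Subsingleton.elim v 0]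
  refine (pow_le_pow_iff_left₀ (norm_nonneg _) ?_ two_ne_zero).1 ?_
  · exact mul_nonneg ((norm_nonneg _).trans (hd i)) (norm_nonneg _)
  simp only [mul_pow, PiLp.norm_sq_eq_of_L2, mulVec_diagonal, norm_mul, Finset.mul_sum]
  gcongr with i
  exact hd i

lemma le_norm_toLp_diagonal_mulVec {d : ι → ℂ} {a : ℝ} (hd : ∀ i, a ≤ ‖d i‖) (v : ι → ℂ) :
    a * ‖toLp 2 v‖ ≤ ‖toLp 2 (diagonal d *ᵥ v)‖ := by
  rcases le_or_gt a 0 with ha | ha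
  · exact (mul_nonpos_of_nonpos_of_nonneg ha (norm_nonneg _)).trans (norm_nonneg _)
  refine (pow_le_pow_iff_left₀ (by positivity) (norm_nonneg _) two_ne_zero).1 ?_
  simp only [mul_pow, PiLp.norm_sq_eq_of_L2, mulVec_diagonal, norm_mul, Finset.mul_sum]
  gcongr with i
  exact hd i

theorem singularValuesIn_unitary_mul_diagonal_mul_iff {U V : Matrix ι ι ℂ}
    (hU : U ∈ unitaryGroup ι ℂ) (hV : V ∈ unitaryGroup ι ℂ) {d : ι → ℂ} {a b : ℝ} :
    (U * diagonal d * V).SingularValuesIn a b ↔ ∀ i, ‖d i‖ ∈ Icc a b := by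
  have hUdV (v : ι → ℂ) :
      ‖toLp 2 ((U * diagonal d * V) *ᵥ v)‖ = ‖toLp 2 (diagonal d *ᵥ (V *ᵥ v))‖ := by
    rw [← mulVec_mulVec, ← mulVec_mulVec, norm_toLp_mulVec_of_mem_unitaryGroup hU]
  constructor
  · intro hA i
    have hVV : V *ᵥ (star V *ᵥ Pi.single i 1) = Pi.single i 1 := by
      rw [mulVec_mulVec, mem_unitaryGroup_iff.1 hV, one_mulVec]
    have hv : ‖toLp 2 (star V *ᵥ Pi.single i 1)‖ = 1 := by
      rw [norm_toLp_mulVec_of_mem_unitaryGroup (Unitary.star_mem hV), PiLp.toLp_single,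
        PiLp.norm_single, norm_one]
    have := hA (star V *ᵥ Pi.single i 1)
    rw [hUdV, hVV, hv, diagonal_mulVec_single, PiLp.toLp_single, PiLp.norm_single] at this
    simpa using this
  · intro hd v
    rw [hUdV, ← norm_toLp_mulVec_of_mem_unitaryGroup hV v]
    exact ⟨le_norm_toLp_diagonal_mulVec (fun i => (hd i).1) _,
      norm_toLp_diagonal_mulVec_le (fun i => (hd i).2) _⟩

def nondegSymmetricIn (a b : ℝ) : Set (Matrix ι ι ℂ) :=
  {A | Aᵀ = A ∧ IsUnit A.det ∧ A.SingularValuesIn a b}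

theorem unitary_mul_diagonal_mul_mem_nondegSymmetricIn {U Ω : Matrix ι ι ℂ}
    (hU : U ∈ unitaryGroup ι ℂ) (hΩ : Ω ∈ unitaryGroup ι ℂ) (hΩs : Ωᵀ = Ω) {σ : ι → ℝ}
    (hσΩ : Commute Ω (diagonal (Complex.ofReal ∘ σ))) {a b : ℝ} (hσ : ∀ i, σ i ∈ Icc a b)
    (hσ₀ : ∀ i, 0 < σ i) :
    U * diagonal (Complex.ofReal ∘ σ) * Ω * Uᵀ ∈ nondegSymmetricIn a b := by
  refine ⟨?_, ?_, ?_⟩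
  · rw [transpose_mul, transpose_mul, transpose_mul, transpose_transpose, hΩs, diagonal_transpose,
      ← mul_assoc Ω, hσΩ.eq]
    simp only [mul_assoc]
  · simp only [det_mul, det_transpose, det_diagonal, Function.comp_apply]
    refine ((((UnitaryGroup.det_isUnit ⟨U, hU⟩).mul ?_).mul (UnitaryGroup.det_isUnit ⟨Ω, hΩ⟩)).mul
      (UnitaryGroup.det_isUnit ⟨U, hU⟩))
    exact isUnit_iff_ne_zero.2 (Finset.prod_ne_zero_iff.2 fun i _ =>
      Complex.ofReal_ne_zero.2 (hσ₀ i).ne')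
  · rw [mul_assoc _ Ω, singularValuesIn_unitary_mul_diagonal_mul_iff hU
      (mul_mem hΩ (transpose_mem_unitaryGroup_iff.2 hU))]
    intro i
    simpa [abs_of_pos (hσ₀ i)] using hσ i

theorem _root_.Commute.diagonal_comp {α R : Type*} [CommRing R] [NoZeroDivisors R]
    {A : Matrix ι ι R} {d : ι → α} {e : α → R} (he : Function.Injective e)
    (hA : Commute A (diagonal (e ∘ d))) (f : α → R) : Commute A (diagonal (f ∘ d)) := by
  ext i j
  have hij := congr_fun₂ hA.eq i j
  simp only [mul_diagonal, diagonal_mul, Function.comp_apply] at hij ⊢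
  rcases eq_or_ne (A i j) 0 with h | h
  · simp [h]
  · rw [he (mul_left_cancel₀ h (hij.trans (mul_comm _ _)))]
    exact mul_comm _ _

omit [DecidableEq ι] in
lemma conjTranspose_mul_self_of_transpose_eq {K : Matrix ι ι ℂ} (hK : Kᵀ = K) :
    Kᴴ * K = (K * Kᴴ)ᵀ := by
  rw [transpose_mul, ← conjTranspose_transpose_eq_transpose_conjTranspose, hK]

theorem exists_unitary_congr_mul_conjTranspose_eq_diagonal {h : Matrix ι ι ℂ}
    (hd : IsUnit h.det) :
    ∃ U ∈ unitaryGroup ι ℂ, ∃ μ : ι → ℝ, (∀ i, 0 < μ i) ∧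
      (Uᴴ * h * Uᴴᵀ) * (Uᴴ * h * Uᴴᵀ)ᴴ = diagonal (Complex.ofReal ∘ μ) := by
  have hP : (h * hᴴ).PosDef := PosDef.mul_conjTranspose_self h
    (vecMul_injective_iff_isUnit.2 ((isUnit_iff_isUnit_det h).2 hd))
  obtain ⟨U, hU, μ, hμ, hPU⟩ : ∃ U ∈ unitaryGroup ι ℂ, ∃ μ : ι → ℝ, (∀ i, 0 < μ i) ∧
      h * hᴴ = U * diagonal (Complex.ofReal ∘ μ) * Uᴴ :=
    ⟨_, hP.1.eigenvectorUnitary.2, _, hP.eigenvalues_pos, by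
      simpa [Unitary.conjStarAlgAut_apply, star_eq_conjTranspose] using hP.1.spectral_theorem⟩
  refine ⟨U, hU, μ, hμ, ?_⟩
  have hUU : Uᴴ * U = 1 := mem_unitaryGroup_iff'.1 hU
  have hUU' : U * Uᴴ = 1 := mem_unitaryGroup_iff.1 hU
  have hUT : Uᴴᵀ * Uᴴᵀᴴ = 1 := by
    rw [conjTranspose_transpose_eq_transpose_conjTranspose, conjTranspose_conjTranspose,
      ← transpose_mul, hUU', transpose_one]
  calc (Uᴴ * h * Uᴴᵀ) * (Uᴴ * h * Uᴴᵀ)ᴴ = Uᴴ * h * (Uᴴᵀ * Uᴴᵀᴴ) * hᴴ * U := by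
        simp only [conjTranspose_mul, conjTranspose_conjTranspose, mul_assoc]
    _ = Uᴴ * (h * hᴴ) * U := by rw [hUT]; simp only [mul_one, mul_assoc]
    _ = _ := by rw [hPU]; simp only [← mul_assoc, hUU, one_mul]; rw [mul_assoc, hUU, mul_one]

theorem exists_eq_diagonal_sqrt_mul {K : Matrix ι ι ℂ} (hKs : Kᵀ = K) {μ : ι → ℝ}
    (hμ : ∀ i, 0 < μ i) (hKK : K * Kᴴ = diagonal (Complex.ofReal ∘ μ)) :
    ∃ Ω ∈ unitaryGroup ι ℂ, Ωᵀ = Ω ∧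
      Commute Ω (diagonal (Complex.ofReal ∘ fun i => √(μ i))) ∧
      K = diagonal (Complex.ofReal ∘ fun i => √(μ i)) * Ω := by
  set σ : ι → ℝ := fun i => √(μ i)
  have hσ : ∀ i, 0 < σ i := fun i => Real.sqrt_pos.2 (hμ i)
  set D := diagonal (Complex.ofReal ∘ μ)
  set S := diagonal (Complex.ofReal ∘ σ)
  set S' := diagonal (Complex.ofReal ∘ σ⁻¹)
  have hKD : Commute K D := by
    have hKK' : Kᴴ * K = D := by
      rw [conjTranspose_mul_self_of_transpose_eq hKs, hKK, diagonal_transpose]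
    rw [commute_iff_eq, ← hKK', ← mul_assoc, hKK, hKK']
  have hKS : Commute K S := hKD.diagonal_comp Complex.ofReal_injective fun x => ((√x : ℝ) : ℂ)
  have hKS' : Commute K S' := hKD.diagonal_comp Complex.ofReal_injective fun x => ((√x)⁻¹ : ℝ)
  have hSS' : S * S' = 1 := by
    rw [diagonal_mul_diagonal, ← diagonal_one]
    congr 1 with i
    simp [(hσ i).ne']
  have hS'DS' : S' * D * S' = 1 := by
    rw [diagonal_mul_diagonal, diagonal_mul_diagonal, ← diagonal_one]
    congr 1 with i
    have hμσ : μ i = σ i * σ i := (Real.mul_self_sqrt (hμ i).le).symm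
    simp [hμσ, (hσ i).ne']
  refine ⟨S' * K, ?_, ?_, (commute_diagonal _ _).mul_left hKS, by rw [← mul_assoc, hSS', one_mul]⟩
  · have hS' : S'ᴴ = S' := by simp [S', diagonal_conjTranspose]
    rw [mem_unitaryGroup_iff, star_eq_conjTranspose, conjTranspose_mul, hS', ← hS'DS', ← hKK]
    simp only [mul_assoc]
  · rw [transpose_mul, hKs, diagonal_transpose, hKS'.eq]

theorem exists_unitary_diagonal_factorization {h : Matrix ι ι ℂ} (hs : hᵀ = h)
    (hd : IsUnit h.det) :
    ∃ U ∈ unitaryGroup ι ℂ, ∃ Ω ∈ unitaryGroup ι ℂ, Ωᵀ = Ω ∧ ∃ σ : ι → ℝ, (∀ i, 0 < σ i) ∧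
      Commute Ω (diagonal (Complex.ofReal ∘ σ)) ∧
      h = U * diagonal (Complex.ofReal ∘ σ) * Ω * Uᵀ := by
  obtain ⟨U, hU, μ, hμ, hKK⟩ := exists_unitary_congr_mul_conjTranspose_eq_diagonal hd
  have hKs : (Uᴴ * h * Uᴴᵀ)ᵀ = Uᴴ * h * Uᴴᵀ := by
    rw [transpose_mul, transpose_mul, transpose_transpose, hs, mul_assoc]
  obtain ⟨Ω, hΩ, hΩs, hΩσ, hK⟩ := exists_eq_diagonal_sqrt_mul hKs hμ hKK
  refine ⟨U, hU, Ω, hΩ, hΩs, _, fun i => Real.sqrt_pos.2 (hμ i), hΩσ, ?_⟩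
  have hUU : U * Uᴴ = 1 := mem_unitaryGroup_iff.1 hU
  calc h = U * Uᴴ * h * (Uᴴᵀ * Uᵀ) := by
        rw [hUU, ← transpose_mul, hUU, transpose_one, one_mul, mul_one]
    _ = U * (Uᴴ * h * Uᴴᵀ) * Uᵀ := by simp only [mul_assoc]
    _ = _ := by rw [hK]; simp only [mul_assoc]

def symmetricUnitaries : Set (Matrix ι ι ℂ) := {W | W ∈ unitaryGroup ι ℂ ∧ Wᵀ = W}

lemma isUnit_det_smul_one_add_smul {Z : Matrix ι ι ℂ} (hZ : Z ∈ unitaryGroup ι ℂ) {a b : ℝ}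
    (hab : |b| < |a|) : IsUnit (a • (1 : Matrix ι ι ℂ) + b • Z).det := by
  rw [isUnit_iff_ne_zero, Ne, ← exists_mulVec_eq_zero_iff]
  rintro ⟨v, hv, hMv⟩
  have hav : a • v = -(b • (Z *ᵥ v)) := by
    rw [add_mulVec, smul_mulVec, smul_mulVec, one_mulVec] at hMv
    exact eq_neg_of_add_eq_zero_left hMv
  have hnorm := congrArg (fun w => ‖toLp 2 w‖) hav
  simp only [toLp_smul, toLp_neg, norm_neg, norm_smul, Real.norm_eq_abs,
    norm_toLp_mulVec_of_mem_unitaryGroup hZ] at hnorm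
  have hv' : 0 < ‖toLp 2 v‖ := norm_pos_iff.2 (by simpa using hv)
  exact hab.ne' (mul_right_cancel₀ hv'.ne' hnorm)

lemma commute_smul_one_add_smul (Z : Matrix ι ι ℂ) (a b c d : ℝ) :
    Commute (a • (1 : Matrix ι ι ℂ) + b • Z) (c • 1 + d • Z) := by
  apply Commute.add_left <;> apply Commute.add_right <;> apply Commute.smul_left <;>
    apply Commute.smul_right <;> simp

lemma conjTranspose_mul_self_smul_one_add_smul {Z : Matrix ι ι ℂ} (hZ : Z ∈ unitaryGroup ι ℂ)
    (a b : ℝ) : (a • 1 + b • Z)ᴴ * (a • 1 + b • Z) =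
      (a ^ 2 + b ^ 2) • (1 : Matrix ι ι ℂ) + (a * b) • (Z + Zᴴ) := by
  have hZZ : Zᴴ * Z = 1 := mem_unitaryGroup_iff'.1 hZ
  simp only [conjTranspose_add, conjTranspose_smul, star_trivial, conjTranspose_one, add_mul,
    mul_add, smul_mul_assoc, mul_smul_comm, one_mul, mul_one, hZZ]
  module

lemma mul_inv_mem_symmetricUnitaries {N D : Matrix ι ι ℂ} (hN : Nᵀ = N) (hD : Dᵀ = D)
    (hND : Commute N D) (hNN : Nᴴ * N = Dᴴ * D) (hDu : IsUnit D.det) :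
    N * D⁻¹ ∈ symmetricUnitaries := by
  have hDu' : IsUnit Dᴴ.det := by simpa [det_conjTranspose] using hDu
  have hND' := hND.units_inv_right (u := ((isUnit_iff_isUnit_det D).2 hDu).unit)
  rw [coe_units_inv, IsUnit.unit_spec] at hND'
  constructor
  · rw [mem_unitaryGroup_iff', star_eq_conjTranspose, conjTranspose_mul,
      conjTranspose_nonsing_inv, mul_assoc, ← mul_assoc Nᴴ, hNN, ← mul_assoc, ← mul_assoc,
      nonsing_inv_mul _ hDu', one_mul, mul_nonsing_inv _ hDu]
  · rw [transpose_mul, transpose_nonsing_inv, hN, hD, hND'.eq]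

theorem joinedIn_symmetricUnitaries_one_of_isUnit_det_one_add {Z : Matrix ι ι ℂ}
    (hZ : Z ∈ symmetricUnitaries) (h1Z : IsUnit (1 + Z).det) :
    JoinedIn symmetricUnitaries 1 Z := by
  set N : ℝ → Matrix ι ι ℂ := fun t => (1 - t) • 1 + (1 + t) • Z
  set D : ℝ → Matrix ι ι ℂ := fun t => (1 + t) • 1 + (1 - t) • Z
  have hD : ∀ t ∈ unitInterval, IsUnit (D t).det := by
    rintro t ⟨ht0, ht1⟩
    rcases ht0.eq_or_lt with rfl | ht0
    · simpa [D] using h1Z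
    · refine isUnit_det_smul_one_add_smul hZ.1 ?_
      rw [abs_of_nonneg (by linarith), abs_of_pos (by linarith)]
      linarith
  refine JoinedIn.ofLine (f := fun t => N t * (D t)⁻¹) ?_ ?_ ?_ ?_
  · refine (show Continuous N by fun_prop).continuousOn.mul fun t ht => ?_
    refine ((continuousAt_matrix_inv _ ?_).comp
      (by fun_prop : Continuous D).continuousAt).continuousWithinAt
    rw [Ring.inverse_eq_inv']
    exact continuousAt_inv₀ (hD t ht).ne_zero
  · have h0 : N 0 = D 0 := by simp [N, D]
    simp only [h0]
    exact mul_nonsing_inv _ (hD 0 unitInterval.zero_mem)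
  · have h1 : D 1 * ((1 / 2 : ℝ) • 1) = 1 := by
      simp only [D, sub_self, zero_smul, add_zero, smul_mul_smul, mul_one]
      norm_num
    simp only [inv_eq_right_inv h1, N, sub_self, zero_smul, zero_add, smul_mul_smul, mul_one]
    norm_num
  · rintro _ ⟨t, ht, rfl⟩
    refine mul_inv_mem_symmetricUnitaries (by simp [N, hZ.2]) (by simp [D, hZ.2])
      (commute_smul_one_add_smul Z _ _ _ _) ?_ (hD t ht)
    simp only [N, D, conjTranspose_mul_self_smul_one_add_smul hZ.1, add_comm ((1 - t) ^ 2),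
      mul_comm (1 - t)]

lemma exists_circle_isUnit_det_one_add_smul (Θ : Matrix ι ι ℂ) :
    ∃ ζ : Circle, IsUnit (1 + (ζ : ℂ) • Θ).det := by
  have hbad : {ζ : Circle | -(ζ : ℂ)⁻¹ ∈ spectrum ℂ Θ}.Finite :=
    Θ.finite_spectrum.preimage
      ((neg_injective.comp (inv_injective.comp Circle.coe_injective)).injOn)
  have hinf : (Circle.exp '' Ico 0 (2 * Real.pi)).Infinite :=
    (Ico_infinite Real.two_pi_pos).image (Circle.exp_injOn_Ico (by rw [sub_zero]))
  obtain ⟨ζ, -, hζ⟩ := (hinf.sdiff hbad).nonempty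
  refine ⟨ζ, ?_⟩
  have hu : IsUnit (algebraMap ℂ (Matrix ι ι ℂ) (-(ζ : ℂ)⁻¹) - Θ) :=
    not_not.1 (spectrum.mem_iff.not.1 hζ)
  have h : 1 + (ζ : ℂ) • Θ = (-(ζ : ℂ)) • (algebraMap ℂ (Matrix ι ι ℂ) (-(ζ : ℂ)⁻¹) - Θ) := by
    rw [Algebra.algebraMap_eq_smul_one, smul_sub, smul_smul, neg_mul_neg,
      mul_inv_cancel₀ (Circle.coe_ne_zero ζ), one_smul, neg_smul, sub_neg_eq_add]
  rw [h, det_smul]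
  exact ((Ne.isUnit (neg_ne_zero.2 (Circle.coe_ne_zero ζ))).pow _).mul
    ((isUnit_iff_isUnit_det _).1 hu)

lemma joinedIn_symmetricUnitaries_circle_smul {W : Matrix ι ι ℂ} (hW : W ∈ symmetricUnitaries)
    (ζ : Circle) : JoinedIn symmetricUnitaries W ((ζ : ℂ) • W) := by
  have h := (joinedIn_univ.2 (PathConnectedSpace.joined 1 ζ)).map
    (f := fun z : Circle => (z : ℂ) • W) (by fun_prop)
  simp only [Circle.coe_one, one_smul, image_univ] at h
  refine h.mono ?_
  rintro _ ⟨z, rfl⟩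
  have hz : (z : ℂ) ∈ unitary ℂ := by
    simp [Unitary.mem_iff, Complex.conj_mul', Complex.mul_conj', Circle.norm_coe]
  exact ⟨Unitary.smul_mem_of_mem hz hW.1, by rw [transpose_smul, hW.2]⟩

theorem joinedIn_symmetricUnitaries_one {W : Matrix ι ι ℂ} (hW : W ∈ symmetricUnitaries) :
    JoinedIn symmetricUnitaries W 1 := by
  obtain ⟨ζ, hζ⟩ := exists_circle_isUnit_det_one_add_smul W
  have hζW : (ζ : ℂ) • W ∈ symmetricUnitaries :=
    (joinedIn_symmetricUnitaries_circle_smul hW ζ).target_mem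
  exact (joinedIn_symmetricUnitaries_circle_smul hW ζ).trans
    (joinedIn_symmetricUnitaries_one_of_isUnit_det_one_add hζW hζ).symm

omit [Fintype ι] in
lemma diagonal_ofReal_const (c : ℝ) : diagonal (Complex.ofReal ∘ fun _ : ι => c) = (c : ℂ) • 1 := by
  rw [smul_one_eq_diagonal]; rfl

theorem joinedIn_nondegSymmetricIn_unitary_mul_diagonal_mul {U Ω : Matrix ι ι ℂ}
    (hU : U ∈ unitaryGroup ι ℂ) (hΩ : Ω ∈ unitaryGroup ι ℂ) (hΩs : Ωᵀ = Ω) {σ : ι → ℝ}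
    (hσΩ : Commute Ω (diagonal (Complex.ofReal ∘ σ))) {a b : ℝ} (hσ : ∀ i, σ i ∈ Icc a b)
    (hσ₀ : ∀ i, 0 < σ i) (hb : 0 < b) (hab : a ≤ b) :
    JoinedIn (nondegSymmetricIn a b) (U * diagonal (Complex.ofReal ∘ σ) * Ω * Uᵀ)
      ((b : ℂ) • (U * Ω * Uᵀ)) := by
  refine JoinedIn.ofLine
    (f := fun t => U * diagonal (Complex.ofReal ∘ fun i => (1 - t) * σ i + t * b) * Ω * Uᵀ)
    (by fun_prop) (by simp) ?_ ?_
  · simp only [sub_self, zero_mul, zero_add, one_mul, diagonal_ofReal_const, mul_smul_comm,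
      smul_mul_assoc, mul_one]
  · rintro _ ⟨t, ⟨ht0, ht1⟩, rfl⟩
    refine unitary_mul_diagonal_mul_mem_nondegSymmetricIn hU hΩ hΩs
      (hσΩ.diagonal_comp Complex.ofReal_injective fun x => (((1 - t) * x + t * b : ℝ) : ℂ))
      (fun i => by simpa only [smul_eq_mul] using
        (convex_Icc (𝕜 := ℝ) a b) (hσ i) ⟨hab, le_rfl⟩ (sub_nonneg.2 ht1) ht0 (sub_add_cancel 1 t))
      (fun i => by simpa only [smul_eq_mul, mem_Ioi] using
        (convex_Ioi (𝕜 := ℝ) (0 : ℝ)) (hσ₀ i) hb (sub_nonneg.2 ht1) ht0 (sub_add_cancel 1 t))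

theorem joinedIn_nondegSymmetricIn_smul_one_of_mem_symmetricUnitaries {Θ : Matrix ι ι ℂ}
    (hΘ : Θ ∈ symmetricUnitaries) {a b : ℝ} (hb : 0 < b) (hab : a ≤ b) :
    JoinedIn (nondegSymmetricIn a b) ((b : ℂ) • Θ) ((b : ℂ) • 1) := by
  refine ((joinedIn_symmetricUnitaries_one hΘ).map (continuous_const_smul (b : ℂ))).mono ?_
  rintro _ ⟨W, hW, rfl⟩
  have hbW : (b : ℂ) • W = 1 * diagonal (Complex.ofReal ∘ fun _ : ι => b) * W * 1ᵀ := by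
    rw [diagonal_ofReal_const, transpose_one, one_mul, mul_one, smul_mul_assoc, one_mul]
  show (b : ℂ) • W ∈ _
  rw [hbW]
  exact unitary_mul_diagonal_mul_mem_nondegSymmetricIn (one_mem _) hW.1 hW.2
    (by rw [diagonal_ofReal_const]; exact (Commute.one_right W).smul_right _)
    (fun _ => ⟨hab, le_rfl⟩) fun _ => hb

theorem joinedIn_nondegSymmetricIn_smul_one [Nonempty ι] {a b : ℝ} {h : Matrix ι ι ℂ}
    (hh : h ∈ nondegSymmetricIn a b) : JoinedIn (nondegSymmetricIn a b) h ((b : ℂ) • 1) := by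
  obtain ⟨hs, hd, hsv⟩ := hh
  obtain ⟨U, hU, Ω, hΩ, hΩs, σ, hσ₀, hσΩ, rfl⟩ := exists_unitary_diagonal_factorization hs hd
  have hσ : ∀ i, σ i ∈ Icc a b := fun i => by
    rw [mul_assoc _ Ω, singularValuesIn_unitary_mul_diagonal_mul_iff hU
      (mul_mem hΩ (transpose_mem_unitaryGroup_iff.2 hU))] at hsv
    simpa [abs_of_pos (hσ₀ i)] using hsv i
  obtain ⟨i⟩ := ‹Nonempty ι›
  have hb : 0 < b := (hσ₀ i).trans_le (hσ i).2
  have hab : a ≤ b := (hσ i).1.trans (hσ i).2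
  have hΘ : U * Ω * Uᵀ ∈ symmetricUnitaries :=
    ⟨mul_mem (mul_mem hU hΩ) (transpose_mem_unitaryGroup_iff.2 hU), by
      rw [transpose_mul, transpose_mul, transpose_transpose, hΩs, mul_assoc]⟩
  exact (joinedIn_nondegSymmetricIn_unitary_mul_diagonal_mul hU hΩ hΩs hσΩ hσ hσ₀ hb hab).trans
    (joinedIn_nondegSymmetricIn_smul_one_of_mem_symmetricUnitaries hΘ hb hab)

end Matrix

open Matrix in
/-- The space of nondegenerate complex quadratic forms on `ℂ^n`
(identified with invertible symmetric `n×n` complex matrices) is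
path-connected; moreover any two nondegenerate forms `h₀, h₁` are joined by a
path `h t` of nondegenerate forms whose operator norms (`‖h t * v‖ ≤ ... * ‖v‖`)
and smallest singular values (`... * ‖v‖ ≤ ‖h t * v‖`) are controlled, in terms
of those of `h₀` and `h₁`, by constants `c, C > 0` depending only on `n`. -/
theorem stmt3 (n : ℕ) :
    ∃ c C : ℝ, 0 < c ∧ 0 < C ∧
      ∀ h₀ h₁ : Matrix (Fin n) (Fin n) ℂ,
        h₀.transpose = h₀ → h₁.transpose = h₁ → IsUnit h₀.det → IsUnit h₁.det →
        ∀ M₀ M₁ m₀ m₁ : ℝ,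
          (∀ v : Fin n → ℂ, ‖h₀.mulVec v‖ ≤ M₀ * ‖v‖) →
          (∀ v : Fin n → ℂ, ‖h₁.mulVec v‖ ≤ M₁ * ‖v‖) →
          (∀ v : Fin n → ℂ, m₀ * ‖v‖ ≤ ‖h₀.mulVec v‖) →
          (∀ v : Fin n → ℂ, m₁ * ‖v‖ ≤ ‖h₁.mulVec v‖) →
          ∃ h : ℝ → Matrix (Fin n) (Fin n) ℂ,
            Continuous h ∧ h 0 = h₀ ∧ h 1 = h₁ ∧
            ∀ t ∈ Set.Icc (0 : ℝ) 1,
              (h t).transpose = h t ∧ IsUnit (h t).det ∧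
              (∀ v : Fin n → ℂ, ‖(h t).mulVec v‖ ≤ C * max M₀ M₁ * ‖v‖) ∧
              (∀ v : Fin n → ℂ, c * min m₀ m₁ * ‖v‖ ≤ ‖(h t).mulVec v‖) := by
  rcases Nat.eq_zero_or_pos n with rfl | hn
  · have h0 (v : Fin 0 → ℂ) : ‖v‖ = 0 := by rw [Subsingleton.elim v 0, norm_zero]
    exact ⟨1, 1, one_pos, one_pos, fun h₀ _ hs₀ _ hd₀ _ _ _ _ _ _ _ _ _ => ⟨fun _ => h₀,
      continuous_const, rfl, Subsingleton.elim _ _, fun _ _ =>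
      ⟨hs₀, hd₀, fun v => by simp only [h0, mul_zero, le_refl],
        fun v => by simp only [h0, mul_zero, le_refl]⟩⟩⟩
  have : Nonempty (Fin n) := ⟨⟨0, hn⟩⟩
  refine ⟨1 / n, n, by positivity, by positivity, ?_⟩
  intro h₀ h₁ hs₀ hs₁ hd₀ hd₁ M₀ M₁ m₀ m₁ hM₀ hM₁ hm₀ hm₁
  set a := min m₀ m₁ / √(Fintype.card (Fin n))
  set b := √(Fintype.card (Fin n)) * max M₀ M₁
  have hmem {h : Matrix (Fin n) (Fin n) ℂ} {m M : ℝ} (hs : hᵀ = h) (hd : IsUnit h.det)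
      (hm : ∀ v, m * ‖v‖ ≤ ‖h *ᵥ v‖) (hM : ∀ v, ‖h *ᵥ v‖ ≤ M * ‖v‖) (hmm : min m₀ m₁ ≤ m)
      (hMM : M ≤ max M₀ M₁) : h ∈ nondegSymmetricIn a b :=
    ⟨hs, hd, (singularValuesIn_of_norm_mulVec_bounds (nonneg_of_norm_le_mul hM) hm hM).mono
      (div_le_div_of_nonneg_right hmm (Real.sqrt_nonneg _))
      (mul_le_mul_of_nonneg_left hMM (Real.sqrt_nonneg _))⟩
  obtain ⟨γ, hγ⟩ := (joinedIn_nondegSymmetricIn_smul_one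
    (hmem hs₀ hd₀ hm₀ hM₀ (min_le_left _ _) (le_max_left _ _))).trans
    (joinedIn_nondegSymmetricIn_smul_one
    (hmem hs₁ hd₁ hm₁ hM₁ (min_le_right _ _) (le_max_right _ _))).symm
  refine ⟨γ.extend, γ.continuous_extend, γ.extend_zero, γ.extend_one, fun t ht => ?_⟩
  obtain ⟨hs, hd, hsv⟩ := γ.extend_apply ht ▸ hγ ⟨t, ht⟩
  have hbounds := hsv.norm_mulVec_bounds
    (mul_nonneg (Real.sqrt_nonneg _) (le_max_of_le_left (nonneg_of_norm_le_mul hM₀)))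
  have hcard : √(Fintype.card (Fin n) : ℝ) * √(Fintype.card (Fin n)) = n := by
    simp [Real.mul_self_sqrt]
  refine ⟨hs, hd, fun v => ?_, fun v => ?_⟩
  · simpa only [b, ← mul_assoc, hcard] using (hbounds v).2
  · simpa only [a, div_div, hcard, one_div_mul_eq_div] using (hbounds v).1
end
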